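/- arXiv:1703.03271 — 5 statements merged into one kernel-verified Lean document; each statement's English description precedes it below -/
import Mathlib

section
/- Let $x_{12},x_{13},x_{14},x_{23},x_{24},x_{34}$ be elements of a field such that the multi-ratio equation $\frac{(x_{12}-x_{24})(x_{13}-x_{23})(x_{14}-x_{34})}{(x_{12}-x_{23})(x_{14}-x_{24})(x_{13}-x_{34})}=1$ holds (with all denominators nonzero). Then the determinant of the $3\times 3$ matrix with rows $(x_{12}x_{34}, x_{12}+x_{34}, 1)$, $(x_{13}x_{24}, x_{13}+x_{24}, 1)$, $(x_{14}x_{23}, x_{14}+x_{23}, 1)$ vanishes. -/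
theorem det_eq_multiRatio_denominator_sub_numerator {R : Type*} [CommRing R]
    (x12 x13 x14 x23 x24 x34 : R) :
    Matrix.det !![x12 * x34, x12 + x34, 1;
                  x13 * x24, x13 + x24, 1;
                  x14 * x23, x14 + x23, 1]
      = (x12 - x23) * (x14 - x24) * (x13 - x34) - (x12 - x24) * (x13 - x23) * (x14 - x34) := by
  rw [Matrix.det_fin_three]
  simp only [Matrix.of_apply, Matrix.cons_val', Matrix.cons_val_zero, Matrix.cons_val_one,
    Matrix.cons_val_two, Matrix.empty_val', Matrix.cons_val_fin_one, Matrix.head_cons,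
    Matrix.tail_cons, Matrix.head_fin_const]
  ring

theorem stmt_0_general {K : Type*} [Field K] (x12 x13 x14 x23 x24 x34 : K)
    (hmr : (x12 - x24) * (x13 - x23) * (x14 - x34)
         = (x12 - x23) * (x14 - x24) * (x13 - x34)) :
    Matrix.det !![x12 * x34, x12 + x34, 1;
                  x13 * x24, x13 + x24, 1;
                  x14 * x23, x14 + x23, 1] = 0 := by
  rw [det_eq_multiRatio_denominator_sub_numerator, hmr, sub_self]

theorem stmt_0 {K : Type*} [Field K] (x12 x13 x14 x23 x24 x34 : K)
    (h1 : x12 - x23 ≠ 0) (h2 : x14 - x24 ≠ 0) (h3 : x13 - x34 ≠ 0)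
    (hmr : (x12 - x24) * (x13 - x23) * (x14 - x34)
         = (x12 - x23) * (x14 - x24) * (x13 - x34)) :
    Matrix.det !![x12 * x34, x12 + x34, 1;
                  x13 * x24, x13 + x24, 1;
                  x14 * x23, x14 + x23, 1] = 0 :=
  stmt_0_general x12 x13 x14 x23 x24 x34 hmr
end

section
/- Let $x_{12},x_{13},x_{14},x_{23},x_{24},x_{34}$ be elements of a field with $(x_{12}-x_{23})(x_{14}-x_{24})(x_{13}-x_{34})\neq 0$. Then the three quadratic polynomials $(X-x_{12})(X-x_{34})$, $(X-x_{13})(X-x_{24})$, $(X-x_{14})(X-x_{23})$ are linearly dependent over the field if and only if $(x_{12}-x_{24})(x_{13}-x_{23})(x_{14}-x_{34}) = (x_{12}-x_{23})(x_{14}-x_{24})(x_{13}-x_{34})$. -/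
/-!
Writing each quadratic as `X ^ 2 - (u + v) X + u v`, a vanishing linear combination is a kernel
vector of the 3 × 3 matrix of coefficients, so the polynomials are dependent exactly when its
determinant vanishes; expanding, that determinant is the difference of the two triple products.
-/

open Polynomial Matrix

theorem Polynomial.sum_C_mul_eq_zero_iff_mulVec_coeff {R : Type*} [CommRing R] {m n : ℕ}
    (p : Fin n → R[X]) (hp : ∀ i, (p i).natDegree < m) (a : Fin n → R) :
    ∑ i, C (a i) * p i = 0 ↔ Matrix.of (fun (j : Fin m) i => (p i).coeff j) *ᵥ a = 0 := by
  constructor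
  · intro h
    funext j
    simpa [finsetSum_coeff, mulVec, dotProduct, mul_comm] using congrArg (coeff · j) h
  · intro h
    ext k
    rw [finsetSum_coeff, coeff_zero]
    by_cases hk : k < m
    · simpa [mulVec, dotProduct, mul_comm] using congrFun h ⟨k, hk⟩
    · exact Finset.sum_eq_zero fun i _ => by
        rw [coeff_C_mul, coeff_eq_zero_of_natDegree_lt ((hp i).trans_le (not_lt.mp hk)), mul_zero]

theorem Polynomial.X_sub_C_mul_X_sub_C {R : Type*} [CommRing R] (u v : R) :
    (X - C u) * (X - C v) = X ^ 2 - C (u + v) * X + C (u * v) := by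
  simp only [map_add, map_mul]; ring

theorem Polynomial.natDegree_X_sub_C_mul_X_sub_C_le {R : Type*} [CommRing R] (u v : R) :
    ((X - C u) * (X - C v)).natDegree ≤ 2 := by
  compute_degree!

theorem exists_ne_zero_fin_three_iff {M : Type*} [Zero M] (P : (Fin 3 → M) → Prop) :
    (∃ v ≠ 0, P v) ↔ ∃ a b c : M, ¬(a = 0 ∧ b = 0 ∧ c = 0) ∧ P ![a, b, c] := by
  constructor
  · rintro ⟨v, hv, h⟩
    refine ⟨v 0, v 1, v 2, fun h0 => hv ?_, by convert h; ext i; fin_cases i <;> rfl⟩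
    ext i; fin_cases i <;> simp [h0]
  · rintro ⟨a, b, c, hne, h⟩
    exact ⟨![a, b, c], fun h0 => hne ⟨congrFun h0 0, congrFun h0 1, congrFun h0 2⟩, h⟩

open Polynomial in
theorem stmt_1_general {K : Type*} [Field K] (x12 x13 x14 x23 x24 x34 : K) :
    (∃ a b c : K, ¬(a = 0 ∧ b = 0 ∧ c = 0) ∧
        C a * ((X - C x12) * (X - C x34))
      + C b * ((X - C x13) * (X - C x24))
      + C c * ((X - C x14) * (X - C x23)) = 0)
    ↔ (x12 - x24) * (x13 - x23) * (x14 - x34)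
      = (x12 - x23) * (x14 - x24) * (x13 - x34) := by
  let q : Fin 3 → K[X] :=
    ![(X - C x12) * (X - C x34), (X - C x13) * (X - C x24), (X - C x14) * (X - C x23)]
  have hq : ∀ i, (q i).natDegree < 3 := by
    intro i; fin_cases i <;> exact Nat.lt_succ_of_le (natDegree_X_sub_C_mul_X_sub_C_le _ _)
  have hM : (Matrix.of fun (j : Fin 3) i => (q i).coeff j) =
      !![x12 * x34, x13 * x24, x14 * x23;
        -(x12 + x34), -(x13 + x24), -(x14 + x23);
        1, 1, 1] := by
    ext j i
    fin_cases j <;> fin_cases i <;> simp [q, X_sub_C_mul_X_sub_C, coeff_X, coeff_C, coeff_X_pow]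
  have hdet : (Matrix.of fun (j : Fin 3) i => (q i).coeff j).det
      = (x12 - x24) * (x13 - x23) * (x14 - x34) - (x12 - x23) * (x14 - x24) * (x13 - x34) := by
    simp only [hM, det_fin_three, of_apply, cons_val_zero, cons_val_one, cons_val_two, tail_cons,
      head_cons]
    ring
  rw [← sub_eq_zero, ← hdet, ← exists_mulVec_eq_zero_iff, exists_ne_zero_fin_three_iff]
  simp only [← sum_C_mul_eq_zero_iff_mulVec_coeff q hq, Fin.sum_univ_three]
  rfl

open Polynomial in
theorem stmt_1 {K : Type*} [Field K] (x12 x13 x14 x23 x24 x34 : K)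
    (hden : (x12 - x23) * (x14 - x24) * (x13 - x34) ≠ 0) :
    (∃ a b c : K, ¬(a = 0 ∧ b = 0 ∧ c = 0) ∧
        C a * ((X - C x12) * (X - C x34))
      + C b * ((X - C x13) * (X - C x24))
      + C c * ((X - C x14) * (X - C x23)) = 0)
    ↔ (x12 - x24) * (x13 - x23) * (x14 - x34)
      = (x12 - x23) * (x14 - x24) * (x13 - x34) :=
  stmt_1_general x12 x13 x14 x23 x24 x34
end

section
/- The map $r_0$ defined by sending $(y_0, y_{00}, y_{m0}, y_{0n}, y_{mn})$ to $(y_{00}, y_0, y_{m0}, y_{0n}, \bar{y}_{mn})$, where $\bar{y}_{mn}$ is determined by the multi-ratio equation $(y_0-y_{m0})(y_{0n}-y_{mn})(y_{00}-\bar{y}_{mn}) = (y_0-y_{mn})(y_{00}-y_{m0})(y_{0n}-\bar{y}_{mn})$, is an involution: applying it twice returns the original values (on the open set where both applications are defined). -/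
/-!
The multi-ratio relation between `(y₀, y₀₀, yₘ₀, y₀ₙ, yₘₙ, z)` is unchanged when `y₀ ↔ y₀₀` and
`yₘₙ ↔ z` are swapped simultaneously. Hence `yₘₙ` itself solves the equation defining the second
application of `r₀`, and since that equation is linear with nonzero leading coefficient, its
solution `w` must be `yₘₙ`.
-/

theorem eq_of_mul_sub_eq_mul_sub {R : Type*} [CommRing R] [NoZeroDivisors R] {a b p q v w : R}
    (hab : a ≠ b) (hv : a * (p - v) = b * (q - v)) (hw : a * (p - w) = b * (q - w)) :
    w = v := by
  have h : (a - b) * (w - v) = 0 := by linear_combination hv - hw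
  exact sub_eq_zero.mp ((mul_eq_zero.mp h).resolve_left (sub_ne_zero.mpr hab))

theorem multiRatio_swap {R : Type*} [CommRing R] {y0 y00 ym0 y0n ymn z : R}
    (h : (y0 - ym0) * (y0n - ymn) * (y00 - z) = (y0 - ymn) * (y00 - ym0) * (y0n - z)) :
    (y00 - ym0) * (y0n - z) * (y0 - ymn) = (y00 - z) * (y0 - ym0) * (y0n - ymn) := by
  linear_combination -h

theorem stmt_4_general {K : Type*} [Field K] (y0 y00 ym0 y0n ymn z w : K)
    (hz : (y0 - ym0) * (y0n - ymn) * (y00 - z)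
        = (y0 - ymn) * (y00 - ym0) * (y0n - z))
    (hnd2 : (y00 - ym0) * (y0n - z) ≠ (y00 - z) * (y0 - ym0))
    (hw : (y00 - ym0) * (y0n - z) * (y0 - w)
        = (y00 - z) * (y0 - ym0) * (y0n - w)) :
    w = ymn :=
  eq_of_mul_sub_eq_mul_sub hnd2 (multiRatio_swap hz) hw

/-- The action `r₀` (swap `y₀ ↔ y₀₀` and update `yₘₙ` by the multi-ratio
equation) is an involution on the open set where both applications are
defined. -/
theorem stmt_4 {K : Type*} [Field K] (y0 y00 ym0 y0n ymn z w : K)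
    (hnd1 : (y0 - ym0) * (y0n - ymn) ≠ (y0 - ymn) * (y00 - ym0))
    (hz : (y0 - ym0) * (y0n - ymn) * (y00 - z)
        = (y0 - ymn) * (y00 - ym0) * (y0n - z))
    (hnd2 : (y00 - ym0) * (y0n - z) ≠ (y00 - z) * (y0 - ym0))
    (hw : (y00 - ym0) * (y0n - z) * (y0 - w)
        = (y00 - z) * (y0 - ym0) * (y0n - w)) :
    w = ymn :=
  stmt_4_general y0 y00 ym0 y0n ymn z w hz hnd2 hw
end

section
/- In the case $k=0$ of Coble's group, the generator $r_0$ (swapping $y_0$ and $y_{00}$ and updating each $y_{mn}$ by the multi-ratio equation) and the generator $t_1$ (swapping column 0 and column 1 of the $y$-array) satisfy the braid relation: $(r_0 t_1)^3 = \mathrm{id}$ on the field of rational functions in the variables, for the minimal case $i=1$, $j=1$ of a $2\times 2$ array together with $y_0$. -/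
/-!
The multi-ratio relation between `(y₀, y₀₀, y₁₀, y₀₁, y₁₁)` and the new value `z` is invariant
under the simultaneous 3-cycle `y₀ → y₀₀ → y₁₀ → y₀` and `z → y₀₁ → y₁₁ → z`. Each of the three
applications of `r₀ t₁` solves this relation for one unknown; rotating the relation solved in
the first step shows that the old `y₀₁` and `y₁₁` solve the relations of the second and third
steps, so by uniqueness of the (linear) solution those steps restore them.
-/

/-- State: `(y₀, y₀₀, y₁₀, y₀₁, y₁₁)`. -/
abbrev CobleState (K : Type*) := K × K × K × K × K

/-- Denominator (leading coefficient) of the multi-ratio equation, linear in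
the unknown `ȳ₁₁`. -/
def mrDen {K : Type*} [Field K] (s : CobleState K) : K :=
  match s with
  | (y0, y00, y10, y01, y11) =>
      (y0 - y11) * (y00 - y10) - (y0 - y10) * (y01 - y11)

/-- The unique solution `ȳ₁₁` of
`(y₀-y₁₀)(y₀₁-y₁₁)(y₀₀-z) = (y₀-y₁₁)(y₀₀-y₁₀)(y₀₁-z)`. -/
def mrBar {K : Type*} [Field K] (s : CobleState K) : K :=
  match s with
  | (y0, y00, y10, y01, y11) =>
      ((y0 - y11) * (y00 - y10) * y01 - (y0 - y10) * (y01 - y11) * y00) /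
        mrDen (y0, y00, y10, y01, y11)

/-- The generator `r₀`: swap `y₀ ↔ y₀₀` and update `y₁₁` by the multi-ratio
equation. -/
def cobleR0 {K : Type*} [Field K] (s : CobleState K) : CobleState K :=
  match s with
  | (y0, y00, y10, y01, y11) => (y00, y0, y10, y01, mrBar (y0, y00, y10, y01, y11))

/-- The generator `t₁`: swap column 0 and column 1 of the array, i.e.
`y₀₀ ↔ y₁₀` and `y₀₁ ↔ y₁₁`. -/
def cobleT1 {K : Type*} [Field K] (s : CobleState K) : CobleState K :=
  match s with
  | (y0, y00, y10, y01, y11) => (y0, y10, y00, y11, y01)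

def MultiRatio {K : Type*} [Field K] (s : CobleState K) (z : K) : Prop :=
  match s with
  | (y0, y00, y10, y01, y11) =>
      (y0 - y10) * (y01 - y11) * (y00 - z) = (y0 - y11) * (y00 - y10) * (y01 - z)

theorem multiRatio_iff_eq_mrBar {K : Type*} [Field K] {s : CobleState K} {z : K}
    (hs : mrDen s ≠ 0) : MultiRatio s z ↔ z = mrBar s := by
  obtain ⟨y0, y00, y10, y01, y11⟩ := s
  simp only [MultiRatio, mrBar, mrDen] at hs ⊢
  rw [eq_div_iff hs]
  constructor <;> intro h <;> linear_combination h

theorem MultiRatio.rotate {K : Type*} [Field K] {y0 y00 y10 y01 y11 z : K}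
    (h : MultiRatio (y0, y00, y10, y01, y11) z) : MultiRatio (y00, y10, y0, z, y01) y11 := by
  simp only [MultiRatio] at h ⊢
  linear_combination h

/-- The braid relation `(r₀ t₁)³ = id` in the case `k = 0`, `i = j = 1`,
on the open set where each application of `r₀` is defined. -/
theorem stmt_11 {K : Type*} [Field K] (s : CobleState K)
    (h1 : mrDen (cobleT1 s) ≠ 0)
    (h2 : mrDen (cobleT1 (cobleR0 (cobleT1 s))) ≠ 0)
    (h3 : mrDen (cobleT1 (cobleR0 (cobleT1 (cobleR0 (cobleT1 s))))) ≠ 0) :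
    cobleR0 (cobleT1 (cobleR0 (cobleT1 (cobleR0 (cobleT1 s))))) = s := by
  obtain ⟨a, b, c, d, e⟩ := s
  simp only [cobleR0, cobleT1] at h1 h2 h3 ⊢
  have hB1 : MultiRatio (a, c, b, e, d) (mrBar (a, c, b, e, d)) :=
    (multiRatio_iff_eq_mrBar h1).2 rfl
  have hB2 : d = mrBar (c, b, a, mrBar (a, c, b, e, d), e) :=
    (multiRatio_iff_eq_mrBar h2).1 hB1.rotate
  rw [← hB2] at h3 ⊢
  have hB3 : e = mrBar (b, a, c, d, mrBar (a, c, b, e, d)) :=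
    (multiRatio_iff_eq_mrBar h3).1 hB1.rotate.rotate
  rw [← hB3]
end

section
/- Let $l_1,l_2,l_3,l_4$ be four lines in affine space $K^M$ over a field $K$, pairwise intersecting in six distinct points $x_{12}=l_1\cap l_2$, $x_{13}=l_1\cap l_3$, $x_{14}=l_1\cap l_4$, $x_{23}=l_2\cap l_3$, $x_{24}=l_2\cap l_4$, $x_{34}=l_3\cap l_4$. Then for each coordinate $\alpha\in\{1,\dots,M\}$, the coordinates satisfy $(x^{(\alpha)}_{12}-x^{(\alpha)}_{24})(x^{(\alpha)}_{13}-x^{(\alpha)}_{23})(x^{(\alpha)}_{14}-x^{(\alpha)}_{34}) = (x^{(\alpha)}_{12}-x^{(\alpha)}_{23})(x^{(\alpha)}_{14}-x^{(\alpha)}_{24})(x^{(\alpha)}_{13}-x^{(\alpha)}_{34})$. -/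
/-- The line through `p` with direction `v` in affine space `K^M`. -/
def affLine {K : Type*} [Field K] {M : ℕ} (p v : Fin M → K) :
    Set (Fin M → K) :=
  {x | ∃ t : K, x = p + t • v}

/-!
Along each line `lᵢ = p + K vᵢ`, any two of its three marked points differ by a multiple of `vᵢ`,
so each of the six differences in the identity is a multiple of the direction of the line
carrying it, and the identity reduces to a relation between these multiples: Menelaus' theorem
for the triangle `x23 x24 x34` cut by `l1`. Going around the triangle modulo `v1` shows that
the Menelaus defect times `v2` is parallel to `v1`; it must vanish, for otherwise `l1` and `l2`
would be parallel lines through `x12`, i.e. equal.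
-/

section Module

variable {K V : Type*} [CommRing K] [AddCommGroup V] [Module K V]

theorem menelaus_defect_smul_mem_span {x12 x13 x14 x23 x24 x34 v1 v2 v3 v4 : V}
    {a1 b1 a2 b2 a3 b3 c d : K}
    (e13 : x13 = x12 + a1 • v1) (e14 : x14 = x12 + b1 • v1)
    (e23 : x23 = x12 + a2 • v2) (e24 : x24 = x12 + b2 • v2)
    (e23' : x23 = x13 + a3 • v3) (e34 : x34 = x13 + b3 • v3)
    (e24' : x24 = x14 + c • v4) (e34' : x34 = x14 + d • v4) :
    (a3 * d * b2 - c * b3 * a2) • v2 ∈ K ∙ v1 := by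
  refine Submodule.mem_span_singleton.mpr ⟨a3 * c * (a1 - b1) - c * b3 * a1 + a3 * d * b1, ?_⟩
  linear_combination (norm := module)
    (a3 * d) • (e24 - e24' - e14) - (a3 * c) • (e34 - e34' + e13 - e14)
      - (c * b3) • (e23 - e23' - e13)

end Module

section AffLine

variable {K : Type*} [Field K] {M : ℕ}

theorem add_smul_mem_affLine {p v x : Fin M → K} (hx : x ∈ affLine p v) (t : K) :
    x + t • v ∈ affLine p v := by
  obtain ⟨s, rfl⟩ := hx
  exact ⟨s + t, by module⟩

theorem exists_eq_add_smul_of_mem_affLine {p v x y : Fin M → K}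
    (hx : x ∈ affLine p v) (hy : y ∈ affLine p v) : ∃ t : K, y = x + t • v := by
  obtain ⟨s, rfl⟩ := hx
  obtain ⟨t, rfl⟩ := hy
  exact ⟨t - s, by module⟩

theorem eq_zero_of_smul_mem_span_of_affLine_inter_eq_singleton {p₁ v₁ p₂ v₂ x : Fin M → K}
    (h : affLine p₁ v₁ ∩ affLine p₂ v₂ = {x}) (hv₂ : v₂ ≠ 0) {k : K} (hk : k • v₂ ∈ K ∙ v₁) :
    k = 0 := by
  obtain ⟨k₁, hk₁⟩ := Submodule.mem_span_singleton.mp hk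
  have hx := (Set.eq_singleton_iff_unique_mem.mp h).1
  have hmem : x + k • v₂ ∈ affLine p₁ v₁ ∩ affLine p₂ v₂ :=
    ⟨hk₁ ▸ add_smul_mem_affLine hx.1 k₁, add_smul_mem_affLine hx.2 k⟩
  rw [h, Set.mem_singleton_iff, add_eq_left, smul_eq_zero] at hmem
  exact hmem.resolve_right hv₂

theorem sub_apply_eq_neg_mul_of_eq_add_smul {x y v : Fin M → K} {t : K}
    (h : y = x + t • v) (α : Fin M) : x α - y α = -(t * v α) := by
  subst h
  simp

end AffLine

theorem stmt_17_general {K : Type*} [Field K] {M : ℕ}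
    (l1 l2 l3 l4 : Set (Fin M → K))
    (hl1 : ∃ p v, v ≠ 0 ∧ l1 = affLine p v)
    (hl2 : ∃ p v, v ≠ 0 ∧ l2 = affLine p v)
    (hl3 : ∃ p v, v ≠ 0 ∧ l3 = affLine p v)
    (hl4 : ∃ p v, v ≠ 0 ∧ l4 = affLine p v)
    (x12 x13 x14 x23 x24 x34 : Fin M → K)
    (h12 : l1 ∩ l2 = {x12}) (h13 : l1 ∩ l3 = {x13}) (h14 : l1 ∩ l4 = {x14})
    (h23 : l2 ∩ l3 = {x23}) (h24 : l2 ∩ l4 = {x24}) (h34 : l3 ∩ l4 = {x34}) :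
    ∀ α : Fin M,
      (x12 α - x24 α) * (x13 α - x23 α) * (x14 α - x34 α)
        = (x12 α - x23 α) * (x14 α - x24 α) * (x13 α - x34 α) := by
  obtain ⟨p1, v1, -, rfl⟩ := hl1
  obtain ⟨p2, v2, hv2, rfl⟩ := hl2
  obtain ⟨p3, v3, -, rfl⟩ := hl3
  obtain ⟨p4, v4, -, rfl⟩ := hl4
  have m12 := (Set.eq_singleton_iff_unique_mem.mp h12).1
  have m13 := (Set.eq_singleton_iff_unique_mem.mp h13).1
  have m14 := (Set.eq_singleton_iff_unique_mem.mp h14).1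
  have m23 := (Set.eq_singleton_iff_unique_mem.mp h23).1
  have m24 := (Set.eq_singleton_iff_unique_mem.mp h24).1
  have m34 := (Set.eq_singleton_iff_unique_mem.mp h34).1
  obtain ⟨a1, e13⟩ := exists_eq_add_smul_of_mem_affLine m12.1 m13.1
  obtain ⟨b1, e14⟩ := exists_eq_add_smul_of_mem_affLine m12.1 m14.1
  obtain ⟨a2, e23⟩ := exists_eq_add_smul_of_mem_affLine m12.2 m23.1
  obtain ⟨b2, e24⟩ := exists_eq_add_smul_of_mem_affLine m12.2 m24.1
  obtain ⟨a3, e23'⟩ := exists_eq_add_smul_of_mem_affLine m13.2 m23.2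
  obtain ⟨b3, e34⟩ := exists_eq_add_smul_of_mem_affLine m13.2 m34.1
  obtain ⟨c, e24'⟩ := exists_eq_add_smul_of_mem_affLine m14.2 m24.2
  obtain ⟨d, e34'⟩ := exists_eq_add_smul_of_mem_affLine m14.2 m34.2
  have hmenelaus : a3 * d * b2 - c * b3 * a2 = 0 :=
    eq_zero_of_smul_mem_span_of_affLine_inter_eq_singleton h12 hv2
      (menelaus_defect_smul_mem_span e13 e14 e23 e24 e23' e34 e24' e34')
  intro α
  simp only [sub_apply_eq_neg_mul_of_eq_add_smul e24 α, sub_apply_eq_neg_mul_of_eq_add_smul e23' α,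
    sub_apply_eq_neg_mul_of_eq_add_smul e34' α, sub_apply_eq_neg_mul_of_eq_add_smul e23 α,
    sub_apply_eq_neg_mul_of_eq_add_smul e24' α, sub_apply_eq_neg_mul_of_eq_add_smul e34 α]
  linear_combination -(v2 α * v3 α * v4 α) * hmenelaus

/-- Four lines in `K^M` pairwise intersecting in six distinct points (a
complete quadrilateral) satisfy, in each coordinate, the multi-ratio
equation. -/
theorem stmt_17 {K : Type*} [Field K] {M : ℕ}
    (l1 l2 l3 l4 : Set (Fin M → K))
    (hl1 : ∃ p v, v ≠ 0 ∧ l1 = affLine p v)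
    (hl2 : ∃ p v, v ≠ 0 ∧ l2 = affLine p v)
    (hl3 : ∃ p v, v ≠ 0 ∧ l3 = affLine p v)
    (hl4 : ∃ p v, v ≠ 0 ∧ l4 = affLine p v)
    (x12 x13 x14 x23 x24 x34 : Fin M → K)
    (h12 : l1 ∩ l2 = {x12}) (h13 : l1 ∩ l3 = {x13}) (h14 : l1 ∩ l4 = {x14})
    (h23 : l2 ∩ l3 = {x23}) (h24 : l2 ∩ l4 = {x24}) (h34 : l3 ∩ l4 = {x34})
    (hdist : [x12, x13, x14, x23, x24, x34].Pairwise (· ≠ ·)) :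
    ∀ α : Fin M,
      (x12 α - x24 α) * (x13 α - x23 α) * (x14 α - x34 α)
        = (x12 α - x23 α) * (x14 α - x24 α) * (x13 α - x34 α) :=
  stmt_17_general l1 l2 l3 l4 hl1 hl2 hl3 hl4 x12 x13 x14 x23 x24 x34 h12 h13 h14 h23 h24 h34
end
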